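/- arXiv:2111.08093 — 3 statements merged into one kernel-verified Lean document; each statement's English description precedes it below -/
import Mathlib

section
/- Let σ ∈ (0, 1), let sequences generated by the conceptual algorithmic framework be given, and let z* ∈ H with 0 ∈ A z*. Then for every integer k ≥ 1: min_{1 ≤ i ≤ k} √(λ_i)·‖v_i‖ ≤ √((1 + σ)/(1 − σ)) · (∑_{i=1}^k λ_i)^{−1/2} · ‖x_0 − z*‖, and min_{1 ≤ i ≤ k} ε_i ≤ (σ²/(2(1 − σ²))) · (∑_{i=1}^k λ_i)^{−1} · ‖x_0 − z*‖². -/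
open scoped Pointwise
open RealInnerProductSpace Filter Topology Set Metric

/-- Sequences generated by the conceptual algorithmic framework: for all `k ≥ 0`,
`v_{k+1}` lies in the `ε_{k+1}`-enlargement `A^{ε_{k+1}}(y_{k+1})`, the relative error
condition `‖λ_{k+1} v_{k+1} + y_{k+1} - x_k‖² + 2 λ_{k+1} ε_{k+1} ≤ σ² ‖y_{k+1} - x_k‖²`
holds, and `x_{k+1} = x_k - λ_{k+1} v_{k+1}`. -/
def CAF {H : Type*} [NormedAddCommGroup H] [InnerProductSpace ℝ H]
    (A : H → Set H) (σ : ℝ) (x y v : ℕ → H) (lam eps : ℕ → ℝ) : Prop :=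
  ∀ k : ℕ,
    0 < lam (k + 1) ∧ 0 ≤ eps (k + 1) ∧
    (∀ xt vt : H, vt ∈ A xt → -(eps (k + 1)) ≤ ⟪y (k + 1) - xt, v (k + 1) - vt⟫) ∧
    ‖lam (k + 1) • v (k + 1) + y (k + 1) - x k‖ ^ 2 + 2 * lam (k + 1) * eps (k + 1)
      ≤ σ ^ 2 * ‖y (k + 1) - x k‖ ^ 2 ∧
    x (k + 1) = x k - lam (k + 1) • v (k + 1)

set_option maxHeartbeats 1000000 in
/-- Pointwise error estimates for the conceptual algorithmic framework:
`min_{1≤i≤k} √λ_i ‖v_i‖ ≤ √((1+σ)/(1-σ)) (∑ λ_i)^{-1/2} ‖x_0 - z*‖` and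
`min_{1≤i≤k} ε_i ≤ σ²/(2(1-σ²)) (∑ λ_i)⁻¹ ‖x_0 - z*‖²`. -/
theorem stmt_16 {H : Type*} [NormedAddCommGroup H] [InnerProductSpace ℝ H] [CompleteSpace H]
    (A : H → Set H)
    (hmono : ∀ x y u v : H, u ∈ A x → v ∈ A y → 0 ≤ ⟪u - v, x - y⟫)
    (hmax : ∀ v x : H, (∀ z u : H, u ∈ A z → 0 ≤ ⟪v - u, x - z⟫) → v ∈ A x)
    (σ : ℝ) (hσ : σ ∈ Set.Ioo (0 : ℝ) 1)
    (x y v : ℕ → H) (lam eps : ℕ → ℝ)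
    (hCAF : CAF A σ x y v lam eps)
    (zstar : H) (hz : 0 ∈ A zstar)
    (k : ℕ) (hk : 1 ≤ k) :
    (∃ i ∈ Finset.Icc 1 k, Real.sqrt (lam i) * ‖v i‖
        ≤ Real.sqrt ((1 + σ) / (1 - σ)) *
            (∑ j ∈ Finset.Icc 1 k, lam j) ^ (-(1 / 2) : ℝ) * ‖x 0 - zstar‖)
    ∧ (∃ i ∈ Finset.Icc 1 k, eps i
        ≤ σ ^ 2 / (2 * (1 - σ ^ 2)) *
            (∑ j ∈ Finset.Icc 1 k, lam j)⁻¹ * ‖x 0 - zstar‖ ^ 2) := by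
  obtain ⟨hσ0, hσ1⟩ := hσ
  have hσ2 : (0:ℝ) < 1 - σ^2 := by nlinarith
  -- inner product expansions
  have expand1 : ∀ (a b : H) (t : ℝ), ‖a - t • b‖^2 = ‖a‖^2 - 2*t*⟪a,b⟫ + t^2*‖b‖^2 := by
    intro a b t
    rw [norm_sub_sq_real, real_inner_smul_right, norm_smul, mul_pow, Real.norm_eq_abs, sq_abs]
    ring
  have expand2 : ∀ (a b : H) (t : ℝ), ‖t • b + a‖^2 = t^2*‖b‖^2 + 2*t*⟪b,a⟫ + ‖a‖^2 := by
    intro a b t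
    rw [norm_add_sq_real, real_inner_smul_left, norm_smul, mul_pow, Real.norm_eq_abs, sq_abs]
    ring
  -- per-step estimates
  have hstep : ∀ j : ℕ,
      ‖x (j+1) - zstar‖^2 + (1 - σ^2) * ‖y (j+1) - x j‖^2 ≤ ‖x j - zstar‖^2 ∧
      (lam (j+1) * ‖v (j+1)‖)^2 ≤ (1+σ)^2 * ‖y (j+1) - x j‖^2 ∧
      2 * lam (j+1) * eps (j+1) ≤ σ^2 * ‖y (j+1) - x j‖^2 := by
    intro j
    obtain ⟨hlam, heps, henl, herr, hx⟩ := hCAF j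
    set l := lam (j+1) with hl
    set w := v (j+1) with hw
    set u := y (j+1) with hu
    set p := x j with hp
    have h1 : -(eps (j+1)) ≤ ⟪u - zstar, w⟫ := by simpa using henl zstar 0 hz
    have hre : l • w + u - p = l • w + (u - p) := by abel
    rw [hre, expand2] at herr
    have herr' : l^2*‖w‖^2 + 2*l*⟪w, u - p⟫ + ‖u - p‖^2 + 2 * l * eps (j+1)
        ≤ σ^2 * ‖u - p‖^2 := herr
    refine ⟨?_, ?_, ?_⟩
    · rw [hx]
      have hre2 : p - l • w - zstar = (p - zstar) - l • w := by abel
      rw [hre2, expand1]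
      have hinner : ⟪p - zstar, w⟫ = ⟪u - zstar, w⟫ - ⟪u - p, w⟫ := by
        rw [← inner_sub_left]; congr 1; abel
      have hsym : ⟪u - p, w⟫ = ⟪w, u - p⟫ := real_inner_comm _ _
      have hnorm : ‖u - p‖ = ‖y (j+1) - x j‖ := rfl
      have hmul := mul_le_mul_of_nonneg_left h1 hlam.le
      rw [hinner, hsym] at *
      nlinarith [hmul, herr']
    · have hle : ‖l • w + (u - p)‖ ≤ σ * ‖u - p‖ := by
        have h2 : ‖l • w + (u - p)‖^2 ≤ (σ * ‖u - p‖)^2 := by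
          rw [expand2]
          nlinarith [herr', mul_nonneg (mul_nonneg (by norm_num : (0:ℝ) ≤ 2) hlam.le) heps]
        have := Real.sqrt_le_sqrt h2
        rwa [Real.sqrt_sq (norm_nonneg _),
          Real.sqrt_sq (mul_nonneg hσ0.le (norm_nonneg _))] at this
      have htri : ‖l • w‖ ≤ ‖l • w + (u - p)‖ + ‖u - p‖ := by
        calc ‖l • w‖ = ‖(l • w + (u - p)) - (u - p)‖ := by congr 1; abel
          _ ≤ _ := norm_sub_le _ _
      have hlw : ‖l • w‖ = l * ‖w‖ := by
        rw [norm_smul, Real.norm_eq_abs, abs_of_pos hlam]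
      have : l * ‖w‖ ≤ (1+σ) * ‖u - p‖ := by rw [← hlw]; nlinarith [htri, hle]
      have h0 : 0 ≤ l * ‖w‖ := mul_nonneg hlam.le (norm_nonneg _)
      nlinarith [this, h0]
    · have hnn : (0:ℝ) ≤ l^2*‖w‖^2 + 2*l*⟪w, u - p⟫ + ‖u - p‖^2 := by
        rw [← expand2]; positivity
      linarith [herr']
  -- telescoping sum
  have hsum : ∀ n : ℕ,
      ‖x n - zstar‖^2 + (1 - σ^2) * ∑ j ∈ Finset.range n, ‖y (j+1) - x j‖^2
        ≤ ‖x 0 - zstar‖^2 := by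
    intro n
    induction n with
    | zero => simp
    | succ n ih =>
      have := (hstep n).1
      rw [Finset.sum_range_succ, mul_add]
      linarith
  set D := ‖x 0 - zstar‖^2 with hD
  set T := ∑ j ∈ Finset.range k, ‖y (j+1) - x j‖^2 with hT
  have hT0 : 0 ≤ T := Finset.sum_nonneg fun _ _ => sq_nonneg _
  have hTD : (1 - σ^2) * T ≤ D := by
    have := hsum k
    nlinarith [sq_nonneg ‖x k - zstar‖]
  have hconv : ∀ (f : ℕ → ℝ),
      ∑ i ∈ Finset.Icc 1 k, f i = ∑ j ∈ Finset.range k, f (j+1) := by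
    intro f
    rw [← Finset.Ico_add_one_right_eq_Icc, Finset.sum_Ico_eq_sum_range]
    simp [Nat.add_comm]
  set S := ∑ j ∈ Finset.Icc 1 k, lam j with hSdef
  have hS : 0 < S := by
    rw [hSdef, hconv]
    exact Finset.sum_pos (fun j _ => (hCAF j).1)
      (Finset.nonempty_range_iff.mpr (by omega))
  have hne : (Finset.Icc 1 k).Nonempty := ⟨1, Finset.mem_Icc.mpr ⟨le_refl 1, hk⟩⟩
  have hlampos : ∀ i ∈ Finset.Icc 1 k, 0 < lam i := by
    intro i hi
    obtain ⟨hi1, _⟩ := Finset.mem_Icc.mp hi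
    obtain ⟨j, rfl⟩ : ∃ j, i = j + 1 := ⟨i - 1, by omega⟩
    exact (hCAF j).1
  constructor
  · -- first claim
    obtain ⟨i₀, hi₀, hmin⟩ := Finset.exists_min_image (Finset.Icc 1 k)
      (fun i => lam i * ‖v i‖^2) hne
    refine ⟨i₀, hi₀, ?_⟩
    set m := lam i₀ * ‖v i₀‖^2 with hm
    have hli₀ : 0 < lam i₀ := hlampos i₀ hi₀
    have hm0 : 0 ≤ m := mul_nonneg hli₀.le (sq_nonneg _)
    have h1 : m * S ≤ (1+σ)^2 * T := by
      calc m * S = ∑ j ∈ Finset.Icc 1 k, m * lam j := by rw [Finset.mul_sum]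
        _ ≤ ∑ j ∈ Finset.Icc 1 k, lam j * (lam j * ‖v j‖^2) := by
            refine Finset.sum_le_sum fun j hj => ?_
            have := hmin j hj
            have hlj := hlampos j hj
            nlinarith
        _ = ∑ j ∈ Finset.range k, lam (j+1) * (lam (j+1) * ‖v (j+1)‖^2) :=
            hconv _
        _ ≤ ∑ j ∈ Finset.range k, (1+σ)^2 * ‖y (j+1) - x j‖^2 := by
            refine Finset.sum_le_sum fun j _ => ?_
            have := (hstep j).2.1
            nlinarith
        _ = (1+σ)^2 * T := by rw [hT, Finset.mul_sum]
    have hmD : m ≤ (1+σ)/(1-σ) * S⁻¹ * D := by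
      have h3 : m * S * (1-σ) ≤ (1+σ) * D := by
        have ha := mul_le_mul_of_nonneg_right h1 (by linarith : (0:ℝ) ≤ 1 - σ)
        have hb := mul_le_mul_of_nonneg_left hTD (by linarith : (0:ℝ) ≤ 1 + σ)
        have hc : (1+σ)^2 * T * (1-σ) = (1+σ) * ((1-σ^2) * T) := by ring
        linarith
      rw [show (1+σ)/(1-σ) * S⁻¹ * D = ((1+σ)*D) / ((1-σ)*S) by
        rw [mul_assoc, inv_mul_eq_div, div_mul_div_comm]]
      rw [le_div_iff₀ (mul_pos (by linarith : (0:ℝ) < 1-σ) hS)]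
      have hd : m * ((1-σ)*S) = m * S * (1-σ) := by ring
      linarith
    have hLHS : Real.sqrt (lam i₀) * ‖v i₀‖ = Real.sqrt m := by
      rw [hm, Real.sqrt_mul hli₀.le, Real.sqrt_sq (norm_nonneg _)]
    have hRHS : Real.sqrt ((1 + σ) / (1 - σ)) * S ^ (-(1 / 2) : ℝ) * ‖x 0 - zstar‖
        = Real.sqrt ((1+σ)/(1-σ) * S⁻¹ * D) := by
      have hq : (0:ℝ) ≤ (1+σ)/(1-σ) := div_nonneg (by linarith) (by linarith)
      rw [Real.rpow_neg hS.le, ← Real.sqrt_eq_rpow]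
      rw [Real.sqrt_mul (mul_nonneg hq (inv_nonneg.mpr hS.le)), hD,
        Real.sqrt_sq (norm_nonneg _), Real.sqrt_mul hq, Real.sqrt_inv]
    rw [hLHS, hRHS]
    exact Real.sqrt_le_sqrt hmD
  · -- second claim
    obtain ⟨i₁, hi₁, hmin⟩ := Finset.exists_min_image (Finset.Icc 1 k) eps hne
    refine ⟨i₁, hi₁, ?_⟩
    have h1 : eps i₁ * S ≤ σ^2/2 * T := by
      calc eps i₁ * S = ∑ j ∈ Finset.Icc 1 k, eps i₁ * lam j := by
            rw [Finset.mul_sum]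
        _ ≤ ∑ j ∈ Finset.Icc 1 k, eps j * lam j := by
            refine Finset.sum_le_sum fun j hj => ?_
            exact mul_le_mul_of_nonneg_right (hmin j hj) (hlampos j hj).le
        _ = ∑ j ∈ Finset.range k, eps (j+1) * lam (j+1) := hconv _
        _ ≤ ∑ j ∈ Finset.range k, σ^2/2 * ‖y (j+1) - x j‖^2 := by
            refine Finset.sum_le_sum fun j _ => ?_
            have := (hstep j).2.2
            linarith
        _ = σ^2/2 * T := by rw [hT, Finset.mul_sum]
    have h3 : eps i₁ * S * (1 - σ^2) ≤ σ^2/2 * D := by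
      have ha := mul_le_mul_of_nonneg_right h1 hσ2.le
      have hb := mul_le_mul_of_nonneg_left hTD (by positivity : (0:ℝ) ≤ σ^2/2)
      have hc : σ^2/2 * T * (1-σ^2) = σ^2/2 * ((1-σ^2) * T) := by ring
      linarith
    rw [show σ^2/(2*(1-σ^2)) * S⁻¹ * ‖x 0 - zstar‖^2
        = (σ^2/2 * D) / ((1-σ^2)*S) by
        rw [← hD, mul_assoc, inv_mul_eq_div, div_mul_div_comm,
          div_eq_div_iff (mul_pos (mul_pos two_pos hσ2) hS).ne'
            (mul_pos hσ2 hS).ne']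
        ring]
    rw [le_div_iff₀ (mul_pos hσ2 hS)]
    have hd : eps i₁ * ((1-σ^2)*S) = eps i₁ * S * (1-σ^2) := by ring
    linarith
end

section
/- Let p ≥ 1 be an integer, θ > 0, σ ∈ (0, 1), let sequences generated by the conceptual algorithmic framework be given satisfying in addition the large-step condition λ_{i}·‖y_{i} − x_{i−1}‖^{p−1} ≥ θ for all i ≥ 1, and let z* ∈ H with 0 ∈ A z* and x_0 ≠ z*. Then for every integer k ≥ 1: ∑_{i=1}^k λ_i ≥ θ · ((1 − σ²)/‖x_0 − z*‖²)^{(p−1)/2} · k^{(p+1)/2}. -/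
/-!
Testing the enlargement inclusion `v_{k+1} ∈ A^{ε_{k+1}}(y_{k+1})` against the zero `(z*, 0)` and
combining it with the relative error condition gives the Fejér-type descent
`(1 - σ²) ‖y_{k+1} - x_k‖² ≤ ‖x_k - z*‖² - ‖x_{k+1} - z*‖²`, so `∑ ‖y_i - x_{i-1}‖²` is at most
`‖x_0 - z*‖² / (1 - σ²)`. With `d_i = ‖y_i - x_{i-1}‖`, the large-step condition gives
`λ_i ≥ θ d_i^{-(p-1)}`, and Hölder's inequality bounds `∑_{i ≤ k} d_i^{-(p-1)}` from below by
`k^{(p+1)/2} / (∑ d_i²)^{(p-1)/2}`.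
-/

open scoped Pointwise
open RealInnerProductSpace Filter Topology Set Metric

open Finset

theorem card_rpow_le_sum_sq_rpow_mul_sum_rpow_neg {ι : Type*} (s : Finset ι) {d : ι → ℝ}
    {q : ℝ} (hq : 0 < q) (hd : ∀ i ∈ s, 0 < d i) :
    (#s : ℝ) ^ ((q + 2) / 2) ≤ (∑ i ∈ s, d i ^ 2) ^ (q / 2) * ∑ i ∈ s, d i ^ (-q) := by
  set a := q / (q + 2) with ha_def
  set b := 2 / (q + 2) with hb_def
  have ha : 0 < a := by positivity
  have hb : 0 < b := by positivity
  have hab : a + b = 1 := by rw [ha_def, hb_def]; field_simp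
  have hga : -(2 * a) * b⁻¹ = -q := by rw [ha_def, hb_def]; field_simp
  have hSa : a * ((q + 2) / 2) = q / 2 := by rw [ha_def]; field_simp
  have hTb : b * ((q + 2) / 2) = 1 := by rw [hb_def]; field_simp
  -- Hölder with exponents `1/a`, `1/b` applied to `d ^ (2a) * d ^ (-2a) = 1`
  have holder := Real.inner_le_Lp_mul_Lq_of_nonneg s (Real.HolderConjugate.inv_inv ha hb hab)
    (f := fun i => d i ^ (2 * a)) (g := fun i => d i ^ (-(2 * a)))
    (fun i hi => (Real.rpow_pos_of_pos (hd i hi) _).le)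
    (fun i hi => (Real.rpow_pos_of_pos (hd i hi) _).le)
  have hfg : ∑ i ∈ s, d i ^ (2 * a) * d i ^ (-(2 * a)) = #s := by
    simp +contextual [← Real.rpow_add (hd _ _)]
  have hf : ∑ i ∈ s, (d i ^ (2 * a)) ^ a⁻¹ = ∑ i ∈ s, d i ^ 2 := by
    refine sum_congr rfl fun i hi => ?_
    rw [← Real.rpow_mul (hd i hi).le, mul_inv_cancel_right₀ ha.ne', Real.rpow_two]
  have hg : ∑ i ∈ s, (d i ^ (-(2 * a))) ^ b⁻¹ = ∑ i ∈ s, d i ^ (-q) := by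
    refine sum_congr rfl fun i hi => ?_
    rw [← Real.rpow_mul (hd i hi).le, hga]
  simp only [hfg, hf, hg, one_div, inv_inv] at holder
  have hS : 0 ≤ ∑ i ∈ s, d i ^ 2 := sum_nonneg fun i _ => sq_nonneg _
  have hT : 0 ≤ ∑ i ∈ s, d i ^ (-q) :=
    sum_nonneg fun i hi => (Real.rpow_pos_of_pos (hd i hi) _).le
  calc (#s : ℝ) ^ ((q + 2) / 2)
      ≤ ((∑ i ∈ s, d i ^ 2) ^ a * (∑ i ∈ s, d i ^ (-q)) ^ b) ^ ((q + 2) / 2) :=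
        Real.rpow_le_rpow (Nat.cast_nonneg _) holder (by positivity)
    _ = (∑ i ∈ s, d i ^ 2) ^ (q / 2) * ∑ i ∈ s, d i ^ (-q) := by
        rw [Real.mul_rpow (by positivity) (by positivity), ← Real.rpow_mul hS,
          ← Real.rpow_mul hT, hSa, hTb, Real.rpow_one]

theorem le_sum_of_le_mul_pow_of_sum_sq_le {ι : Type*} (s : Finset ι) {d lam : ι → ℝ} {θ S : ℝ}
    (m : ℕ) (hθ : 0 < θ) (hS : 0 < S) (hd : ∀ i ∈ s, 0 ≤ d i)
    (hstep : ∀ i ∈ s, θ ≤ lam i * d i ^ m) (hdS : ∑ i ∈ s, d i ^ 2 ≤ S) :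
    θ * (1 / S) ^ ((m : ℝ) / 2) * (#s : ℝ) ^ (((m : ℝ) + 2) / 2) ≤ ∑ i ∈ s, lam i := by
  rcases m.eq_zero_or_pos with rfl | hm
  · simp only [pow_zero, mul_one] at hstep
    simpa [mul_comm] using card_nsmul_le_sum s lam θ hstep
  have hd_pos : ∀ i ∈ s, 0 < d i := fun i hi => (hd i hi).lt_of_ne' fun h => by
    have := hstep i hi
    rw [h, zero_pow hm.ne', mul_zero] at this
    exact this.not_gt hθ
  have hlam : ∀ i ∈ s, θ * d i ^ (-(m : ℝ)) ≤ lam i := fun i hi => by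
    rw [Real.rpow_neg (hd i hi), Real.rpow_natCast, ← div_eq_mul_inv,
      div_le_iff₀ (pow_pos (hd_pos i hi) m)]
    exact hstep i hi
  calc θ * (1 / S) ^ ((m : ℝ) / 2) * (#s : ℝ) ^ (((m : ℝ) + 2) / 2)
      ≤ θ * (1 / S) ^ ((m : ℝ) / 2) *
          ((∑ i ∈ s, d i ^ 2) ^ ((m : ℝ) / 2) * ∑ i ∈ s, d i ^ (-(m : ℝ))) := by
        gcongr
        exact card_rpow_le_sum_sq_rpow_mul_sum_rpow_neg s (by exact_mod_cast hm) hd_pos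
    _ ≤ θ * (1 / S) ^ ((m : ℝ) / 2) * (S ^ ((m : ℝ) / 2) * ∑ i ∈ s, d i ^ (-(m : ℝ))) := by
        have := sum_nonneg fun i hi => (Real.rpow_pos_of_pos (hd_pos i hi) (-(m : ℝ))).le
        gcongr
    _ = θ * ∑ i ∈ s, d i ^ (-(m : ℝ)) := by
        rw [← mul_assoc, mul_assoc θ, ← Real.mul_rpow (by positivity) hS.le,
          one_div_mul_cancel hS.ne', Real.one_rpow, mul_one]
    _ ≤ ∑ i ∈ s, lam i := by
        rw [mul_sum]
        exact sum_le_sum hlam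

section Framework

variable {H : Type*} [NormedAddCommGroup H] [InnerProductSpace ℝ H]

theorem norm_sub_sq_sub_norm_sub_sub_sq (x y z u : H) :
    ‖x - z‖ ^ 2 - ‖x - u - z‖ ^ 2 = 2 * ⟪y - z, u⟫ + ‖y - x‖ ^ 2 - ‖u + y - x‖ ^ 2 := by
  simp only [← real_inner_self_eq_norm_sq, inner_sub_left, inner_sub_right, inner_add_left,
    inner_add_right, real_inner_comm]
  ring

variable {A : H → Set H} {σ : ℝ} {x y v : ℕ → H} {lam eps : ℕ → ℝ} {z : H}

theorem CAF.one_sub_sq_mul_norm_sq_le (hCAF : CAF A σ x y v lam eps) (hz : 0 ∈ A z) (k : ℕ) :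
    (1 - σ ^ 2) * ‖y (k + 1) - x k‖ ^ 2 ≤ ‖x k - z‖ ^ 2 - ‖x (k + 1) - z‖ ^ 2 := by
  obtain ⟨hlam, -, henl, herr, hx⟩ := hCAF k
  have hv : -eps (k + 1) ≤ ⟪y (k + 1) - z, v (k + 1)⟫ := by simpa using henl z 0 hz
  have h := norm_sub_sq_sub_norm_sub_sub_sq (x k) (y (k + 1)) z (lam (k + 1) • v (k + 1))
  rw [← hx, real_inner_smul_right] at h
  linarith [mul_le_mul_of_nonneg_left hv hlam.le]

theorem CAF.one_sub_sq_mul_sum_norm_sq_le (hCAF : CAF A σ x y v lam eps) (hz : 0 ∈ A z)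
    (k : ℕ) :
    (1 - σ ^ 2) * ∑ i ∈ Icc 1 k, ‖y i - x (i - 1)‖ ^ 2 ≤ ‖x 0 - z‖ ^ 2 - ‖x k - z‖ ^ 2 := by
  induction k with
  | zero => simp
  | succ k ih =>
    rw [sum_Icc_succ_top (by omega), mul_add, Nat.add_sub_cancel]
    linarith [hCAF.one_sub_sq_mul_norm_sq_le hz k]

end Framework

theorem stmt_17_general {H : Type*} [NormedAddCommGroup H] [InnerProductSpace ℝ H]
    (A : H → Set H)
    (p : ℕ) (hp : 1 ≤ p) (θ : ℝ) (hθ : 0 < θ)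
    (σ : ℝ) (hσ : σ ∈ Set.Ioo (0 : ℝ) 1)
    (x y v : ℕ → H) (lam eps : ℕ → ℝ)
    (hCAF : CAF A σ x y v lam eps)
    (hstep : ∀ i : ℕ, 1 ≤ i → θ ≤ lam i * ‖y i - x (i - 1)‖ ^ (p - 1))
    (zstar : H) (hz : 0 ∈ A zstar) (hx0 : x 0 ≠ zstar)
    (k : ℕ) :
    θ * ((1 - σ ^ 2) / ‖x 0 - zstar‖ ^ 2) ^ (((p : ℝ) - 1) / 2) *
        (k : ℝ) ^ (((p : ℝ) + 1) / 2)
      ≤ ∑ i ∈ Finset.Icc 1 k, lam i := by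
  have hσ2 : 0 < 1 - σ ^ 2 := by nlinarith [hσ.1, hσ.2]
  have hR : 0 < ‖x 0 - zstar‖ ^ 2 := by
    have := norm_pos_iff.2 (sub_ne_zero.2 hx0)
    positivity
  have hsum : ∑ i ∈ Icc 1 k, ‖y i - x (i - 1)‖ ^ 2 ≤ ‖x 0 - zstar‖ ^ 2 / (1 - σ ^ 2) := by
    rw [le_div_iff₀' hσ2]
    linarith [hCAF.one_sub_sq_mul_sum_norm_sq_le hz k, sq_nonneg ‖x k - zstar‖]
  have h := le_sum_of_le_mul_pow_of_sum_sq_le (Icc 1 k) (p - 1) hθ (div_pos hR hσ2)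
    (fun _ _ => norm_nonneg _) (fun i hi => hstep i (mem_Icc.1 hi).1) hsum
  rw [one_div_div, Nat.card_Icc, Nat.add_sub_cancel, Nat.cast_sub hp, Nat.cast_one] at h
  convert h using 4
  ring

/-- Under the large-step condition `λ_i ‖y_i - x_{i-1}‖^{p-1} ≥ θ`,
the stepsizes satisfy `∑_{i=1}^k λ_i ≥ θ ((1-σ²)/‖x_0 - z*‖²)^{(p-1)/2} k^{(p+1)/2}`. -/
theorem stmt_17 {H : Type*} [NormedAddCommGroup H] [InnerProductSpace ℝ H] [CompleteSpace H]
    (A : H → Set H)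
    (hmono : ∀ x y u v : H, u ∈ A x → v ∈ A y → 0 ≤ ⟪u - v, x - y⟫)
    (hmax : ∀ v x : H, (∀ z u : H, u ∈ A z → 0 ≤ ⟪v - u, x - z⟫) → v ∈ A x)
    (p : ℕ) (hp : 1 ≤ p) (θ : ℝ) (hθ : 0 < θ)
    (σ : ℝ) (hσ : σ ∈ Set.Ioo (0 : ℝ) 1)
    (x y v : ℕ → H) (lam eps : ℕ → ℝ)
    (hCAF : CAF A σ x y v lam eps)
    (hstep : ∀ i : ℕ, 1 ≤ i → θ ≤ lam i * ‖y i - x (i - 1)‖ ^ (p - 1))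
    (zstar : H) (hz : 0 ∈ A zstar) (hx0 : x 0 ≠ zstar)
    (k : ℕ) (hk : 1 ≤ k) :
    θ * ((1 - σ ^ 2) / ‖x 0 - zstar‖ ^ 2) ^ (((p : ℝ) - 1) / 2) *
        (k : ℝ) ^ (((p : ℝ) + 1) / 2)
      ≤ ∑ i ∈ Finset.Icc 1 k, lam i :=
  stmt_17_general A p hp θ hθ σ hσ x y v lam eps hCAF hstep zstar hz hx0 k
end

section
/- Let p ≥ 1 be an integer, θ > 0, σ ∈ (0, 1), and let sequences generated by the conceptual algorithmic framework be given with ε_k = 0 and v_k ∈ A(y_k) for all k ≥ 1, satisfying in addition the large-step condition λ_{i}·‖y_{i} − x_{i−1}‖^{p−1} ≥ θ for all i ≥ 1. Assume A⁻¹(0) = {z : 0 ∈ A z} is nonempty and the error bound condition holds with constants δ > 0 and κ > 0. Then there exist k₀ ∈ ℕ and c ∈ (0, 1) such that for all k ≥ k₀: dist(x_{k+1}, A⁻¹(0))² ≤ (1 − c) · dist(x_k, A⁻¹(0))²; in particular the iterates (x_k) converge to A⁻¹(0) at a local linear rate. -/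
open scoped Pointwise
open RealInnerProductSpace Filter Topology Set Metric

/-- Local linear convergence of the conceptual algorithmic framework,
with exact inclusions (`ε_k = 0`, `v_k ∈ A(y_k)`) and the large-step condition, under
the error bound condition: eventually
`dist(x_{k+1}, A⁻¹(0))² ≤ (1 - c) dist(x_k, A⁻¹(0))²`. -/
theorem stmt_19 {H : Type*} [NormedAddCommGroup H] [InnerProductSpace ℝ H] [CompleteSpace H]
    (A : H → Set H)
    (hmono : ∀ x y u v : H, u ∈ A x → v ∈ A y → 0 ≤ ⟪u - v, x - y⟫)
    (hmax : ∀ v x : H, (∀ z u : H, u ∈ A z → 0 ≤ ⟪v - u, x - z⟫) → v ∈ A x)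
    (p : ℕ) (hp : 1 ≤ p) (θ : ℝ) (hθ : 0 < θ)
    (σ : ℝ) (hσ : σ ∈ Set.Ioo (0 : ℝ) 1)
    (x y v : ℕ → H) (lam eps : ℕ → ℝ)
    (hCAF : CAF A σ x y v lam eps)
    (heps : ∀ k : ℕ, 1 ≤ k → eps k = 0)
    (hv : ∀ k : ℕ, 1 ≤ k → v k ∈ A (y k))
    (hstep : ∀ i : ℕ, 1 ≤ i → θ ≤ lam i * ‖y i - x (i - 1)‖ ^ (p - 1))
    (hne : ∃ z : H, 0 ∈ A z)
    (δ κ : ℝ) (hδ : 0 < δ) (hκ : 0 < κ)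
    (hEB : ∀ u : H, (A u).Nonempty → sInf ((fun ξ => ‖ξ‖) '' A u) ≤ δ →
      Metric.infDist u {z : H | 0 ∈ A z} ≤ κ * sInf ((fun ξ => ‖ξ‖) '' A u)) :
    ∃ (k₀ : ℕ) (c : ℝ), 0 < c ∧ c < 1 ∧ ∀ k : ℕ, k₀ ≤ k →
      Metric.infDist (x (k + 1)) {z : H | 0 ∈ A z} ^ 2
        ≤ (1 - c) * Metric.infDist (x k) {z : H | 0 ∈ A z} ^ 2 := by
  obtain ⟨hσ0, hσ1⟩ := hσ
  obtain ⟨z₀, hz₀⟩ := hne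
  set S : Set H := {z : H | 0 ∈ A z} with hS
  have hSne : S.Nonempty := ⟨z₀, hz₀⟩
  -- key Fejér inequality
  have hkey : ∀ k : ℕ, ∀ z ∈ S,
      ‖x (k + 1) - z‖ ^ 2 + (1 - σ ^ 2) * ‖y (k + 1) - x k‖ ^ 2 ≤ ‖x k - z‖ ^ 2 := by
    intro k z hz
    obtain ⟨hlam, -, -, herr, hx⟩ := hCAF k
    have he0 : eps (k + 1) = 0 := heps (k + 1) (Nat.le_add_left 1 k)
    have hv1 : v (k + 1) ∈ A (y (k + 1)) := hv (k + 1) (Nat.le_add_left 1 k)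
    have herr' : ‖lam (k + 1) • v (k + 1) + (y (k + 1) - x k)‖ ^ 2
        ≤ σ ^ 2 * ‖y (k + 1) - x k‖ ^ 2 := by
      rw [← add_sub_assoc]
      rw [he0] at herr
      linarith
    have hmon : 0 ≤ ⟪v (k + 1) - 0, y (k + 1) - z⟫ := hmono _ _ _ _ hv1 hz
    rw [sub_zero] at hmon
    set w : H := lam (k + 1) • v (k + 1) with hw
    have e1 : ‖(x k - z) - w‖ ^ 2 = ‖x k - z‖ ^ 2 - 2 * ⟪x k - z, w⟫ + ‖w‖ ^ 2 :=
      norm_sub_sq_real _ _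
    have e2 : ‖w + (y (k + 1) - x k)‖ ^ 2
        = ‖w‖ ^ 2 + 2 * ⟪w, y (k + 1) - x k⟫ + ‖y (k + 1) - x k‖ ^ 2 :=
      norm_add_sq_real _ _
    have e3 : ⟪x k - z, w⟫ = ⟪w, x k - z⟫ := real_inner_comm _ _
    have e4 : ⟪w, x k - z⟫ = ⟪w, x k - y (k + 1)⟫ + ⟪w, y (k + 1) - z⟫ := by
      rw [← inner_add_right]
      congr 1
      abel
    have e5 : ⟪w, x k - y (k + 1)⟫ = -⟪w, y (k + 1) - x k⟫ := by
      rw [← inner_neg_right]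
      congr 1
      abel
    have e6 : 0 ≤ ⟪w, y (k + 1) - z⟫ := by
      rw [hw, real_inner_smul_left]
      exact mul_nonneg hlam.le hmon
    have hx' : x (k + 1) - z = (x k - z) - w := by rw [hx]; abel
    rw [hx', e1]
    linarith [herr', e2, e3, e4, e5, e6]
  have hr0 : ∀ k : ℕ, (0 : ℝ) ≤ ‖y (k + 1) - x k‖ := fun k => norm_nonneg _
  have hσ2 : 0 < 1 - σ ^ 2 := by nlinarith
  -- ‖y (k+1) - x k‖ → 0
  have hrlim : Tendsto (fun k => ‖y (k + 1) - x k‖) atTop (𝓝 0) := by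
    set d : ℕ → ℝ := fun k => ‖x k - z₀‖ ^ 2 with hd
    have hdkey : ∀ k, d (k + 1) + (1 - σ ^ 2) * ‖y (k + 1) - x k‖ ^ 2 ≤ d k :=
      fun k => hkey k z₀ hz₀
    have hanti : Antitone d := by
      apply antitone_nat_of_succ_le
      intro k
      have := hdkey k
      nlinarith [hr0 k, sq_nonneg (‖y (k + 1) - x k‖)]
    have hbdd : BddBelow (Set.range d) := ⟨0, by rintro _ ⟨k, rfl⟩; positivity⟩
    have hL : Tendsto d atTop (𝓝 (⨅ k, d k)) := tendsto_atTop_ciInf hanti hbdd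
    have hL1 : Tendsto (fun k => d (k + 1)) atTop (𝓝 (⨅ k, d k)) :=
      hL.comp (tendsto_add_atTop_nat 1)
    have hdiff : Tendsto (fun k => d k - d (k + 1)) atTop (𝓝 0) := by
      have := hL.sub hL1
      simpa using this
    have hsq : Tendsto (fun k => ‖y (k + 1) - x k‖ ^ 2) atTop (𝓝 0) := by
      have h1 : Tendsto (fun k => (d k - d (k + 1)) / (1 - σ ^ 2)) atTop (𝓝 0) := by
        simpa using hdiff.div_const (1 - σ ^ 2)
      apply squeeze_zero (fun k => sq_nonneg _) (fun k => ?_) h1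
      rw [le_div_iff₀ hσ2]
      have := hdkey k
      linarith
    have h2 : Tendsto ((fun s => Real.sqrt s) ∘ fun k => ‖y (k + 1) - x k‖ ^ 2) atTop
        (𝓝 (Real.sqrt 0)) := (Real.continuous_sqrt.tendsto 0).comp hsq
    rw [Real.sqrt_zero] at h2
    have heq : ((fun s => Real.sqrt s) ∘ fun k => ‖y (k + 1) - x k‖ ^ 2)
        = fun k => ‖y (k + 1) - x k‖ := by
      funext k
      simp only [Function.comp_apply]
      exact Real.sqrt_sq (hr0 k)
    rwa [heq] at h2
  -- eventually small
  set t : ℝ := min 1 (θ * δ / (1 + σ)) with ht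
  have ht0 : 0 < t := lt_min one_pos (by positivity)
  obtain ⟨k₀, hk₀⟩ := (eventually_atTop.mp (hrlim.eventually_lt_const ht0))
  -- constants
  obtain ⟨C, hC⟩ : ∃ C : ℝ, C = 1 + κ * (1 + σ) / θ := ⟨_, rfl⟩
  have hC1 : 1 ≤ C := by
    rw [hC]
    have : 0 ≤ κ * (1 + σ) / θ := by positivity
    linarith
  have hC0 : 0 < C := lt_of_lt_of_le one_pos hC1
  obtain ⟨c, hc⟩ : ∃ c : ℝ, c = (1 - σ ^ 2) / C ^ 2 := ⟨_, rfl⟩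
  have hc0 : 0 < c := by rw [hc]; exact div_pos hσ2 (pow_pos hC0 2)
  refine ⟨k₀, c, hc0, ?_, ?_⟩
  · rw [hc, div_lt_one (pow_pos hC0 2)]
    nlinarith [mul_le_mul hC1 hC1 (by norm_num : (0:ℝ) ≤ 1) hC0.le, mul_pos hσ0 hσ0]
  have hcC : c * C ^ 2 = 1 - σ ^ 2 := by
    rw [hc]
    exact div_mul_cancel₀ _ (ne_of_gt (pow_pos hC0 2))
  intro k hk
  obtain ⟨hlam, -, -, herr, hx⟩ := hCAF k
  have he0 : eps (k + 1) = 0 := heps (k + 1) (Nat.le_add_left 1 k)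
  have hv1 : v (k + 1) ∈ A (y (k + 1)) := hv (k + 1) (Nat.le_add_left 1 k)
  obtain ⟨r, hrdef⟩ : ∃ r : ℝ, r = ‖y (k + 1) - x k‖ := ⟨_, rfl⟩
  rw [← hrdef] at herr
  have hrt : r < t := by rw [hrdef]; exact hk₀ k hk
  have hr1 : r ≤ 1 := le_of_lt (lt_of_lt_of_le hrt (min_le_left _ _))
  have hrδ : r ≤ θ * δ / (1 + σ) := le_of_lt (lt_of_lt_of_le hrt (min_le_right _ _))
  have hrnn : (0 : ℝ) ≤ r := by rw [hrdef]; exact hr0 k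
  rcases eq_or_lt_of_le hrnn with hr | hr
  · -- r = 0 : x k is already a zero of A
    have hyx : y (k + 1) = x k := by
      have h0 : ‖y (k + 1) - x k‖ = 0 := by rw [← hrdef]; exact hr.symm
      rw [norm_eq_zero, sub_eq_zero] at h0
      exact h0
    have hv0 : v (k + 1) = 0 := by
      rw [← hr] at herr
      have h1 : ‖lam (k + 1) • v (k + 1) + y (k + 1) - x k‖ ^ 2 ≤ 0 := by nlinarith [herr]
      have h2 : ‖lam (k + 1) • v (k + 1) + y (k + 1) - x k‖ ^ 2 = 0 :=
        le_antisymm h1 (sq_nonneg _)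
      have h3 : lam (k + 1) • v (k + 1) + y (k + 1) - x k = 0 := by
        rw [pow_eq_zero_iff (two_ne_zero), norm_eq_zero] at h2
        exact h2
      rw [hyx] at h3
      have h4 : lam (k + 1) • v (k + 1) = 0 := by
        have h5 : lam (k + 1) • v (k + 1) + x k - x k = lam (k + 1) • v (k + 1) := by abel
        rwa [h5] at h3
      rcases smul_eq_zero.mp h4 with h | h
      · exact absurd h (ne_of_gt hlam)
      · exact h
    have hxk : x k ∈ S := by
      have : (0 : H) ∈ A (y (k + 1)) := hv0 ▸ hv1
      rwa [hyx] at this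
    have hxk1 : x (k + 1) = x k := by
      rw [hx, hv0, smul_zero, sub_zero]
    rw [hxk1, Metric.infDist_zero_of_mem hxk]
    norm_num
  · -- r > 0
    rw [he0] at herr
    have herr' : ‖lam (k + 1) • v (k + 1) + y (k + 1) - x k‖ ≤ σ * r := by
      have h1 : ‖lam (k + 1) • v (k + 1) + y (k + 1) - x k‖ ^ 2 ≤ (σ * r) ^ 2 := by
        rw [mul_pow]; linarith [herr]
      exact (pow_le_pow_iff_left₀ (norm_nonneg _) (by positivity) (by norm_num)).mp h1
    have hlamv : ‖lam (k + 1) • v (k + 1)‖ ≤ (1 + σ) * r := by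
      have h1 : lam (k + 1) • v (k + 1)
          = (lam (k + 1) • v (k + 1) + y (k + 1) - x k) + (x k - y (k + 1)) := by abel
      have h2 : ‖x k - y (k + 1)‖ = r := by rw [hrdef, norm_sub_rev]
      calc ‖lam (k + 1) • v (k + 1)‖
          = ‖(lam (k + 1) • v (k + 1) + y (k + 1) - x k) + (x k - y (k + 1))‖ := by rw [← h1]
        _ ≤ ‖lam (k + 1) • v (k + 1) + y (k + 1) - x k‖ + ‖x k - y (k + 1)‖ := norm_add_le _ _
        _ ≤ σ * r + r := by rw [h2]; linarith [herr']
        _ = (1 + σ) * r := by ring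
    have hlamv' : lam (k + 1) * ‖v (k + 1)‖ ≤ (1 + σ) * r := by
      rwa [norm_smul, Real.norm_eq_abs, abs_of_pos hlam] at hlamv
    have hstep' : θ ≤ lam (k + 1) * r ^ (p - 1) := by
      have h := hstep (k + 1) (Nat.le_add_left 1 k)
      rw [hrdef]
      simpa using h
    have hvb : θ * ‖v (k + 1)‖ ≤ (1 + σ) * r ^ p := by
      have h1 : θ * ‖v (k + 1)‖ ≤ (lam (k + 1) * r ^ (p - 1)) * ‖v (k + 1)‖ :=
        mul_le_mul_of_nonneg_right hstep' (norm_nonneg _)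
      have h2 : r ^ (p - 1) * (lam (k + 1) * ‖v (k + 1)‖) ≤ r ^ (p - 1) * ((1 + σ) * r) :=
        mul_le_mul_of_nonneg_left hlamv' (pow_nonneg hr.le _)
      have h3 : r ^ (p - 1) * r = r ^ p := by
        rw [← pow_succ]
        congr 1
        omega
      calc θ * ‖v (k + 1)‖ ≤ (lam (k + 1) * r ^ (p - 1)) * ‖v (k + 1)‖ := h1
        _ = r ^ (p - 1) * (lam (k + 1) * ‖v (k + 1)‖) := by ring
        _ ≤ r ^ (p - 1) * ((1 + σ) * r) := h2
        _ = (1 + σ) * (r ^ (p - 1) * r) := by ring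
        _ = (1 + σ) * r ^ p := by rw [h3]
    have hrp : r ^ p ≤ r := by
      calc r ^ p ≤ r ^ 1 := pow_le_pow_of_le_one hr.le hr1 hp
        _ = r := pow_one r
    have hvθ : θ * ‖v (k + 1)‖ ≤ (1 + σ) * r := by
      linarith [hvb, hrp, mul_le_mul_of_nonneg_left hrp hσ0.le]
    have hvr : ‖v (k + 1)‖ ≤ (1 + σ) * r / θ := by
      rw [le_div_iff₀ hθ]
      linarith [hvθ]
    have h1σr : r * (1 + σ) ≤ θ * δ := (le_div_iff₀ (by positivity)).mp hrδ
    have hvδ : ‖v (k + 1)‖ ≤ δ :=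
      le_of_mul_le_mul_left (by linarith [hvθ, h1σr] : θ * ‖v (k + 1)‖ ≤ θ * δ) hθ
    -- error bound applied at y (k+1)
    have hAy : (A (y (k + 1))).Nonempty := ⟨v (k + 1), hv1⟩
    have hbdd : BddBelow ((fun ξ => ‖ξ‖) '' A (y (k + 1))) := by
      refine ⟨0, ?_⟩
      rintro _ ⟨ξ, -, rfl⟩
      exact norm_nonneg _
    have hsinf : sInf ((fun ξ => ‖ξ‖) '' A (y (k + 1))) ≤ ‖v (k + 1)‖ :=
      csInf_le hbdd ⟨v (k + 1), hv1, rfl⟩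
    have hEBy : Metric.infDist (y (k + 1)) S ≤ κ * ‖v (k + 1)‖ := by
      have h := hEB (y (k + 1)) hAy (hsinf.trans hvδ)
      have h2 : κ * sInf ((fun ξ => ‖ξ‖) '' A (y (k + 1))) ≤ κ * ‖v (k + 1)‖ :=
        mul_le_mul_of_nonneg_left hsinf hκ.le
      exact h.trans h2
    have hdx : Metric.infDist (x k) S ≤ C * r := by
      have h1 : Metric.infDist (x k) S
          ≤ Metric.infDist (y (k + 1)) S + dist (x k) (y (k + 1)) :=
        Metric.infDist_le_infDist_add_dist
      have h2 : dist (x k) (y (k + 1)) = r := by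
        rw [hrdef, dist_eq_norm, norm_sub_rev]
      rw [h2] at h1
      have h7 : κ * (θ * ‖v (k + 1)‖) ≤ κ * ((1 + σ) * r) :=
        mul_le_mul_of_nonneg_left hvθ hκ.le
      have h8 : θ * Metric.infDist (x k) S
          ≤ θ * (Metric.infDist (y (k + 1)) S + r) :=
        mul_le_mul_of_nonneg_left h1 hθ.le
      have h9 : θ * Metric.infDist (y (k + 1)) S ≤ θ * (κ * ‖v (k + 1)‖) :=
        mul_le_mul_of_nonneg_left hEBy hθ.le
      have h10 : θ * (C * r) = θ * r + κ * ((1 + σ) * r) := by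
        rw [hC]; field_simp
      have h11 : θ * Metric.infDist (x k) S ≤ θ * (C * r) := by
        rw [h10]; linarith [h7, h8, h9]
      exact le_of_mul_le_mul_left h11 hθ
    -- combine
    have hd0 : 0 ≤ Metric.infDist (x k) S := Metric.infDist_nonneg
    have hd0' : 0 ≤ Metric.infDist (x (k + 1)) S := Metric.infDist_nonneg
    have hcd : c * Metric.infDist (x k) S ^ 2 ≤ (1 - σ ^ 2) * r ^ 2 := by
      have h1 : Metric.infDist (x k) S ^ 2 ≤ (C * r) ^ 2 :=
        pow_le_pow_left₀ hd0 hdx 2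
      calc c * Metric.infDist (x k) S ^ 2 ≤ c * (C * r) ^ 2 :=
            mul_le_mul_of_nonneg_left h1 hc0.le
        _ = (c * C ^ 2) * r ^ 2 := by ring
        _ = (1 - σ ^ 2) * r ^ 2 := by rw [hcC]
    obtain ⟨a, ha⟩ : ∃ a : ℝ,
        a = Metric.infDist (x (k + 1)) S ^ 2 + c * Metric.infDist (x k) S ^ 2 := ⟨_, rfl⟩
    have ha0 : 0 ≤ a := by
      rw [ha]
      exact add_nonneg (sq_nonneg _) (mul_nonneg hc0.le (sq_nonneg _))
    have hmain : a ≤ Metric.infDist (x k) S ^ 2 := by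
      have hsqle : Real.sqrt a ≤ Metric.infDist (x k) S := by
        rw [Metric.infDist_eq_iInf]
        have hne' : Nonempty ↥S := hSne.to_subtype
        refine le_ciInf fun zz => ?_
        obtain ⟨z, hz⟩ := zz
        have h1 : ‖x (k + 1) - z‖ ^ 2 + (1 - σ ^ 2) * r ^ 2 ≤ ‖x k - z‖ ^ 2 := by
          rw [hrdef]
          exact hkey k z hz
        have h2 : Metric.infDist (x (k + 1)) S ≤ ‖x (k + 1) - z‖ := by
          rw [← dist_eq_norm]
          exact Metric.infDist_le_dist_of_mem hz
        have h2' : Metric.infDist (x (k + 1)) S ^ 2 ≤ ‖x (k + 1) - z‖ ^ 2 :=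
          pow_le_pow_left₀ hd0' h2 2
        have h3 : a ≤ ‖x k - z‖ ^ 2 := by rw [ha]; linarith [h1, h2', hcd]
        calc Real.sqrt a ≤ Real.sqrt (‖x k - z‖ ^ 2) := Real.sqrt_le_sqrt h3
          _ = ‖x k - z‖ := Real.sqrt_sq (norm_nonneg _)
          _ = dist (x k) z := (dist_eq_norm _ _).symm
      calc a = Real.sqrt a ^ 2 := (Real.sq_sqrt ha0).symm
        _ ≤ Metric.infDist (x k) S ^ 2 :=
            pow_le_pow_left₀ (Real.sqrt_nonneg _) hsqle 2
    rw [ha] at hmain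
    linarith [hmain]
end
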